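/- For all integers 1 ≤ m ≤ n with m + n ≥ 3, the complete bipartite graph K_{m,n} satisfies χ_md(K_{m,n}) = 2. -/

import Mathlib

open SimpleGraph

/-- A majority dominator coloring: a proper coloring such that every vertex `v`
dominates at least half of some (nonempty) color class, i.e. there is a color class `C`
with `|C| ≤ 2 * |C ∩ N[v]|`. -/
def SimpleGraph.IsMajorityDominatorColoring {V : Type*} (G : SimpleGraph V) {k : ℕ}
    (c : V → Fin k) : Prop :=
  (∀ u v, G.Adj u v → c u ≠ c v) ∧
  ∀ v : V, ∃ i : Fin k,
    {u | c u = i}.Nonempty ∧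
    {u | c u = i}.ncard ≤ 2 * {u | c u = i ∧ (u = v ∨ G.Adj v u)}.ncard

/-- The majority dominator chromatic number. -/
noncomputable def SimpleGraph.majorityDominatorChromaticNumber {V : Type*}
    (G : SimpleGraph V) : ℕ :=
  sInf {k | ∃ c : V → Fin k, G.IsMajorityDominatorColoring c}

namespace SimpleGraph

variable {V : Type*} {G : SimpleGraph V}

theorem IsMajorityDominatorColoring.colorable {k : ℕ} {c : V → Fin k}
    (hc : G.IsMajorityDominatorColoring c) : G.Colorable k :=
  ⟨Coloring.mk c fun h => hc.1 _ _ h⟩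

theorem IsMajorityDominatorColoring.two_le {k : ℕ} {c : V → Fin k}
    (hc : G.IsMajorityDominatorColoring c) {u v : V} (huv : G.Adj u v) : 2 ≤ k := by
  have : (2 : ℕ∞) ≤ k := (two_le_chromaticNumber_of_adj huv).trans hc.colorable.chromaticNumber_le
  exact_mod_cast this

/-- Every dominator coloring is a majority dominator coloring. -/
theorem isMajorityDominatorColoring_of_forall_exists_class_subset {k : ℕ} (c : V → Fin k)
    (hproper : ∀ u v, G.Adj u v → c u ≠ c v)
    (hdom : ∀ v, ∃ i, {u | c u = i}.Nonempty ∧ ∀ u, c u = i → u = v ∨ G.Adj v u) :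
    G.IsMajorityDominatorColoring c := by
  refine ⟨hproper, fun v => ?_⟩
  obtain ⟨i, hne, hsub⟩ := hdom v
  have hclass : {u | c u = i ∧ (u = v ∨ G.Adj v u)} = {u | c u = i} :=
    Set.ext fun u => ⟨And.left, fun hu => ⟨hu, hsub u hu⟩⟩
  exact ⟨i, hne, hclass ▸ Nat.le_mul_of_pos_left _ two_pos⟩

theorem majorityDominatorChromaticNumber_eq_two {c : V → Fin 2}
    (hc : G.IsMajorityDominatorColoring c) {u v : V} (huv : G.Adj u v) :
    G.majorityDominatorChromaticNumber = 2 :=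
  le_antisymm (Nat.sInf_le ⟨c, hc⟩) (le_csInf ⟨2, c, hc⟩ fun _ ⟨_, hc'⟩ => hc'.two_le huv)

/-- Each vertex dominates the whole opposite side. -/
theorem isMajorityDominatorColoring_completeBipartiteGraph {α β : Type*} [Nonempty α]
    [Nonempty β] :
    (completeBipartiteGraph α β).IsMajorityDominatorColoring
      (Sum.elim (fun _ => (0 : Fin 2)) (fun _ => 1)) := by
  refine isMajorityDominatorColoring_of_forall_exists_class_subset _ ?_ ?_
  · rintro (a | a) (b | b) hadj <;> simp_all
  · rintro (a | b)
    · exact ⟨1, ⟨.inr (Classical.arbitrary β), rfl⟩, by rintro (_ | _) <;> simp⟩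
    · exact ⟨0, ⟨.inl (Classical.arbitrary α), rfl⟩, by rintro (_ | _) <;> simp⟩

end SimpleGraph

theorem md_completeBipartite_general (m n : ℕ) (hm : 1 ≤ m) (hmn : m ≤ n) :
    (completeBipartiteGraph (Fin m) (Fin n)).majorityDominatorChromaticNumber = 2 := by
  have : NeZero m := ⟨by omega⟩
  have : NeZero n := ⟨by omega⟩
  exact majorityDominatorChromaticNumber_eq_two isMajorityDominatorColoring_completeBipartiteGraph
    (u := .inl 0) (v := .inr 0) (by simp)

theorem md_completeBipartite (m n : ℕ) (hm : 1 ≤ m) (hmn : m ≤ n) (h3 : 3 ≤ m + n) :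
    (completeBipartiteGraph (Fin m) (Fin n)).majorityDominatorChromaticNumber = 2 :=
  md_completeBipartite_general m n hm hmn
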